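/- Assume (ND). Let p1 and p2 be two distinct solution denominators with 1 ≤ deg p2 ≤ deg p1 =: d, and assume a1 = (n1−1)·d − 1 and a2 ≤ (n2−1)·d − 1. Then (n1−1)·d = a1 + 1, and exactly one of the following holds: (1) a2 = (n2−1)·d − 1 and a3 < (n3−1)·d − 1, in which case T_d = {2,1,∂} and a3 − a2 ≤ (n3−n2)·deg p2, deg p2 ≤ d, and (n3−n2)·d ≤ a3; (2) a2 < (n2−1)·d − 1 and a3 = (n3−1)·d − 1, in which case T_d = {3,1,∂} and deg p2 = d; (3) a2 = (n2−1)·d − 1 and a3 = (n3−1)·d − 1, in which case T_d = {3,2,1,∂} and deg p2 = d. -/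

import Mathlib

open Polynomial

/-- Index set `{3, 2, 1, ∂}` for the terms of the generalized Abel equation. -/
inductive AbelIdx : Type
  | I1 : AbelIdx
  | I2 : AbelIdx
  | I3 : AbelIdx
  | D  : AbelIdx
  deriving DecidableEq

instance : Fintype AbelIdx :=
  ⟨{AbelIdx.I1, AbelIdx.I2, AbelIdx.I3, AbelIdx.D}, fun x => by cases x <;> decide⟩

/-- `p` is a solution denominator: `p ≠ 0` and
`p^(n3-2)·p' + A3 + A2·p^(n3-n2) + A1·p^(n3-n1) = 0`, i.e. `x = 1/p` solves the
generalized Abel equation `x' = A3 x^{n3} + A2 x^{n2} + A1 x^{n1}`. -/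
def IsSolDen {𝕜 : Type*} [Field 𝕜] (n1 n2 n3 : ℕ) (A1 A2 A3 : Polynomial 𝕜)
    (p : Polynomial 𝕜) : Prop :=
  p ≠ 0 ∧
    p ^ (n3 - 2) * Polynomial.derivative p + A3 + A2 * p ^ (n3 - n2) + A1 * p ^ (n3 - n1) = 0

/-- `Φ_ℓ(r)` for `ℓ ∈ {1,2,3,∂}`. -/
def Phi (n1 n2 n3 a1 a2 a3 r : ℕ) : AbelIdx → ℤ
  | .I1 => (n1 : ℤ) * r - a1
  | .I2 => (n2 : ℤ) * r - a2
  | .I3 => (n3 : ℤ) * r - a3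
  | .D  => (r : ℤ) + 1

/-- `O_r`, the minimum of the four `Φ_ℓ(r)`. -/
def Omin (n1 n2 n3 a1 a2 a3 r : ℕ) : ℤ :=
  min (min (Phi n1 n2 n3 a1 a2 a3 r .I1) (Phi n1 n2 n3 a1 a2 a3 r .I2))
      (min (Phi n1 n2 n3 a1 a2 a3 r .I3) (Phi n1 n2 n3 a1 a2 a3 r .D))

/-- `T_r = {ℓ : Φ_ℓ(r) = O_r}`. -/
def Tie (n1 n2 n3 a1 a2 a3 r : ℕ) : Finset AbelIdx :=
  Finset.univ.filter fun ℓ => Phi n1 n2 n3 a1 a2 a3 r ℓ = Omin n1 n2 n3 a1 a2 a3 r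

/-- `r` is edge-admissible if `T_r` has at least two elements. -/
def EdgeAdmissible (n1 n2 n3 a1 a2 a3 r : ℕ) : Prop :=
  2 ≤ (Tie n1 n2 n3 a1 a2 a3 r).card

/-- The edge polynomial `P_r(C)`. -/
noncomputable def edgePoly {𝕜 : Type*} [Field 𝕜] (n1 n2 n3 : ℕ)
    (A1 A2 A3 : Polynomial 𝕜) (r : ℕ) : Polynomial 𝕜 :=
  (if AbelIdx.I1 ∈ Tie n1 n2 n3 A1.natDegree A2.natDegree A3.natDegree r then
      Polynomial.C A1.leadingCoeff * Polynomial.X ^ n1 else 0) +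
  (if AbelIdx.I2 ∈ Tie n1 n2 n3 A1.natDegree A2.natDegree A3.natDegree r then
      Polynomial.C A2.leadingCoeff * Polynomial.X ^ n2 else 0) +
  (if AbelIdx.I3 ∈ Tie n1 n2 n3 A1.natDegree A2.natDegree A3.natDegree r then
      Polynomial.C A3.leadingCoeff * Polynomial.X ^ n3 else 0) +
  (if AbelIdx.D ∈ Tie n1 n2 n3 A1.natDegree A2.natDegree A3.natDegree r then
      (r : Polynomial 𝕜) * Polynomial.X else 0)

/-- The set `Γ` of candidate denominator degrees. -/
def Gamma (n1 n2 n3 a1 a2 a3 : ℕ) : Set ℕ :=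
  {r | 0 < r ∧ ((n3 : ℤ) - n2) * r ≤ (a3 : ℤ) ∧
    (((n3 : ℤ) - n2) * r = (a3 : ℤ) - a2 ∨
     ((n3 : ℤ) - n1) * r = (a3 : ℤ) - a1 ∨
     ((n2 : ℤ) - n1) * r = (a2 : ℤ) - a1 ∨
     ((n3 : ℤ) - 1) * r = (a3 : ℤ) + 1 ∨
     ((n2 : ℤ) - 1) * r = (a2 : ℤ) + 1 ∨
     ((n1 : ℤ) - 1) * r = (a1 : ℤ) + 1)}

/-- The nondegeneracy hypothesis (ND). -/
def ND {𝕜 : Type*} [Field 𝕜] (n1 n2 n3 : ℕ) (A1 A2 A3 : Polynomial 𝕜) : Prop :=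
  ∀ r : ℕ, r ∈ Gamma n1 n2 n3 A1.natDegree A2.natDegree A3.natDegree →
    EdgeAdmissible n1 n2 n3 A1.natDegree A2.natDegree A3.natDegree r →
    ((∀ c : 𝕜, c ≠ 0 → (edgePoly n1 n2 n3 A1 A2 A3 r).IsRoot c →
        (Polynomial.derivative (edgePoly n1 n2 n3 A1 A2 A3 r)).eval c ≠ 0) ∧
     (AbelIdx.D ∈ Tie n1 n2 n3 A1.natDegree A2.natDegree A3.natDegree r →
        ∀ c : 𝕜, c ≠ 0 → (edgePoly n1 n2 n3 A1 A2 A3 r).IsRoot c →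
          ∀ m : ℕ, 1 ≤ m →
            (Polynomial.derivative (edgePoly n1 n2 n3 A1 A2 A3 r)).eval c + (m : 𝕜) ≠ 0) ∧
     (¬ ∃ c1 c2 ζ : 𝕜, c1 ≠ 0 ∧ c2 ≠ 0 ∧
        (edgePoly n1 n2 n3 A1 A2 A3 r).IsRoot c1 ∧
        (edgePoly n1 n2 n3 A1 A2 A3 r).IsRoot c2 ∧
        ζ ≠ 1 ∧ c1 = ζ * c2 ∧
        (ζ ^ (n3 - n2) = 1 ∨ ζ ^ (n3 - n1) = 1 ∨ ζ ^ (n3 - 1) = 1)))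

/-- The power-series form `E_r(y)` of the generalized Abel equation at infinity. -/
noncomputable def abelPS {𝕜 : Type*} [Field 𝕜] (n1 n2 n3 : ℕ)
    (A1 A2 A3 : Polynomial 𝕜) (r : ℕ) (y : PowerSeries 𝕜) : PowerSeries 𝕜 :=
  PowerSeries.X ^ (((r : ℤ) + 1 - Omin n1 n2 n3 A1.natDegree A2.natDegree A3.natDegree r).toNat) *
      ((r : PowerSeries 𝕜) * y + PowerSeries.X * PowerSeries.derivativeFun y) +
  PowerSeries.X ^ ((Phi n1 n2 n3 A1.natDegree A2.natDegree A3.natDegree r AbelIdx.I1 -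
      Omin n1 n2 n3 A1.natDegree A2.natDegree A3.natDegree r).toNat) *
      (A1.reverse : PowerSeries 𝕜) * y ^ n1 +
  PowerSeries.X ^ ((Phi n1 n2 n3 A1.natDegree A2.natDegree A3.natDegree r AbelIdx.I2 -
      Omin n1 n2 n3 A1.natDegree A2.natDegree A3.natDegree r).toNat) *
      (A2.reverse : PowerSeries 𝕜) * y ^ n2 +
  PowerSeries.X ^ ((Phi n1 n2 n3 A1.natDegree A2.natDegree A3.natDegree r AbelIdx.I3 -
      Omin n1 n2 n3 A1.natDegree A2.natDegree A3.natDegree r).toNat) *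
      (A3.reverse : PowerSeries 𝕜) * y ^ n3


section Aux

open Polynomial

lemma solden_factor {𝕜 : Type*} [Field 𝕜] {n1 n2 n3 : ℕ}
    (hn1 : 1 < n1) (hn12 : n1 < n2) (hn23 : n2 < n3)
    {A1 A2 A3 p : Polynomial 𝕜} (h : IsSolDen n1 n2 n3 A1 A2 A3 p) :
    A3 = -(p ^ (n3 - n2) *
      (p ^ (n2 - 2) * Polynomial.derivative p + A2 + A1 * p ^ (n2 - n1))) := by
  have h2 := h.2
  have e1 : n3 - 2 = (n3 - n2) + (n2 - 2) := by omega
  have e2 : n3 - n1 = (n3 - n2) + (n2 - n1) := by omega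
  rw [e1, e2, pow_add, pow_add] at h2
  linear_combination h2

lemma solden_coeff {𝕜 : Type*} [Field 𝕜] {n1 n2 n3 : ℕ}
    {A1 A2 A3 p : Polynomial 𝕜} (h : IsSolDen n1 n2 n3 A1 A2 A3 p) (N : ℕ) :
    (p ^ (n3 - 2) * Polynomial.derivative p).coeff N + A3.coeff N
      + (A2 * p ^ (n3 - n2)).coeff N + (A1 * p ^ (n3 - n1)).coeff N = 0 := by
  have := congrArg (fun q : Polynomial 𝕜 => q.coeff N) h.2
  simpa [coeff_add] using this

lemma ndb_dp {𝕜 : Type*} [Field 𝕜] (p : Polynomial 𝕜) (k : ℕ) :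
    (p ^ k * Polynomial.derivative p).natDegree ≤ k * p.natDegree + (p.natDegree - 1) :=
  natDegree_mul_le.trans (add_le_add natDegree_pow_le (natDegree_derivative_le p))

lemma ndb_mulpow {𝕜 : Type*} [Field 𝕜] (A p : Polynomial 𝕜) (k : ℕ) :
    (A * p ^ k).natDegree ≤ A.natDegree + k * p.natDegree :=
  natDegree_mul_le.trans (add_le_add le_rfl natDegree_pow_le)

lemma solden_dvd_deg {𝕜 : Type*} [Field 𝕜] {n1 n2 n3 : ℕ}
    (hn1 : 1 < n1) (hn12 : n1 < n2) (hn23 : n2 < n3)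
    {A1 A2 A3 p : Polynomial 𝕜} (h : IsSolDen n1 n2 n3 A1 A2 A3 p) (hA3 : A3 ≠ 0) :
    (n3 - n2) * p.natDegree ≤ A3.natDegree := by
  have hf := solden_factor hn1 hn12 hn23 h
  have hdvd : p ^ (n3 - n2) ∣ A3 :=
    ⟨-(p ^ (n2 - 2) * Polynomial.derivative p + A2 + A1 * p ^ (n2 - n1)),
      by rw [hf]; ring⟩
  have := Polynomial.natDegree_le_of_dvd hdvd hA3
  rwa [natDegree_pow] at this

lemma deriv_natDegree {𝕜 : Type*} [Field 𝕜] [CharZero 𝕜] {p : Polynomial 𝕜}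
    (hp : p ≠ 0) (hd : 1 ≤ p.natDegree) :
    (Polynomial.derivative p).natDegree = p.natDegree - 1 ∧
    (Polynomial.derivative p).leadingCoeff = p.natDegree * p.leadingCoeff := by
  have hc : (Polynomial.derivative p).coeff (p.natDegree - 1)
      = p.leadingCoeff * (p.natDegree : 𝕜) := by
    rw [coeff_derivative]
    have h1 : p.natDegree - 1 + 1 = p.natDegree := by omega
    have h2 : ((p.natDegree - 1 : ℕ) : 𝕜) + 1 = (p.natDegree : 𝕜) := by
      exact_mod_cast congrArg (fun m : ℕ => (m : 𝕜)) h1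
    rw [h1, h2, leadingCoeff]
  have hne : (Polynomial.derivative p).coeff (p.natDegree - 1) ≠ 0 := by
    rw [hc]
    exact mul_ne_zero (leadingCoeff_ne_zero.mpr hp)
      (by exact_mod_cast (by omega : p.natDegree ≠ 0))
  have hle : (Polynomial.derivative p).natDegree ≤ p.natDegree - 1 := natDegree_derivative_le p
  have hge : p.natDegree - 1 ≤ (Polynomial.derivative p).natDegree := le_natDegree_of_ne_zero hne
  have heq : (Polynomial.derivative p).natDegree = p.natDegree - 1 := le_antisymm hle hge
  refine ⟨heq, ?_⟩
  rw [leadingCoeff, heq, hc]; ring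

lemma solden_no_single_A3 {𝕜 : Type*} [Field 𝕜] {n1 n2 n3 : ℕ}
    {A1 A2 A3 p : Polynomial 𝕜} (h : IsSolDen n1 n2 n3 A1 A2 A3 p) (hA3 : A3 ≠ 0)
    (h1 : (p ^ (n3 - 2) * Polynomial.derivative p).natDegree < A3.natDegree)
    (h2 : (A2 * p ^ (n3 - n2)).natDegree < A3.natDegree)
    (h3 : (A1 * p ^ (n3 - n1)).natDegree < A3.natDegree) : False := by
  have hc := solden_coeff h A3.natDegree
  rw [coeff_eq_zero_of_natDegree_lt h1, coeff_eq_zero_of_natDegree_lt h2,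
    coeff_eq_zero_of_natDegree_lt h3, coeff_natDegree] at hc
  simp only [zero_add, add_zero] at hc
  exact hA3 (leadingCoeff_eq_zero.mp hc)

lemma tie_eq_general (n1 n2 n3 a1 a2 a3 d : ℕ) (S : Finset AbelIdx)
    (h1 : (n1 : ℤ) * d - a1 = (d : ℤ) + 1)
    (hI1 : AbelIdx.I1 ∈ S) (hD : AbelIdx.D ∈ S)
    (h2 : if AbelIdx.I2 ∈ S then (n2 : ℤ) * d - a2 = (d : ℤ) + 1
      else (d : ℤ) + 1 < (n2 : ℤ) * d - a2)
    (h3 : if AbelIdx.I3 ∈ S then (n3 : ℤ) * d - a3 = (d : ℤ) + 1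
      else (d : ℤ) + 1 < (n3 : ℤ) * d - a3) :
    Tie n1 n2 n3 a1 a2 a3 d = S := by
  have hx2 : (d : ℤ) + 1 ≤ (n2 : ℤ) * d - a2 := by
    split_ifs at h2 with hm
    · exact h2.ge
    · exact h2.le
  have hx3 : (d : ℤ) + 1 ≤ (n3 : ℤ) * d - a3 := by
    split_ifs at h3 with hm
    · exact h3.ge
    · exact h3.le
  have hO : Omin n1 n2 n3 a1 a2 a3 d = (d : ℤ) + 1 := by
    unfold Omin
    simp only [Phi]
    rw [h1, min_eq_left hx2, min_eq_right hx3, min_self]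
  ext ℓ
  simp only [Tie, Finset.mem_filter, Finset.mem_univ, true_and, hO]
  cases ℓ
  · exact iff_of_true (by simp only [Phi]; exact h1) hI1
  · by_cases hm : AbelIdx.I2 ∈ S
    · rw [if_pos hm] at h2
      exact iff_of_true (by simp only [Phi]; exact h2) hm
    · rw [if_neg hm] at h2
      refine iff_of_false ?_ hm
      simp only [Phi]
      intro hcon
      linarith
  · by_cases hm : AbelIdx.I3 ∈ S
    · rw [if_pos hm] at h3
      exact iff_of_true (by simp only [Phi]; exact h3) hm
    · rw [if_neg hm] at h3
      refine iff_of_false ?_ hm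
      simp only [Phi]
      intro hcon
      linarith
  · exact iff_of_true (by simp only [Phi]) hD

end Aux

/-- Proposition 5.8, case (C3). Under (ND), for two distinct
solution denominators with `1 ≤ deg p2 ≤ deg p1 = d`, if `a1 = (n1−1)d − 1` and
`a2 ≤ (n2−1)d − 1`, then `d = r_{1∂}` and exactly one of the three listed
alternatives occurs. -/
theorem stmt13 {𝕜 : Type*} [RCLike 𝕜] (n1 n2 n3 : ℕ)
    (hn1 : 1 < n1) (hn12 : n1 < n2) (hn23 : n2 < n3)
    (A1 A2 A3 : Polynomial 𝕜) (hA1 : A1 ≠ 0) (hA2 : A2 ≠ 0) (hA3 : A3 ≠ 0)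
    (hND : ND n1 n2 n3 A1 A2 A3)
    (p1 p2 : Polynomial 𝕜)
    (h1 : IsSolDen n1 n2 n3 A1 A2 A3 p1) (h2 : IsSolDen n1 n2 n3 A1 A2 A3 p2)
    (hne : p1 ≠ p2) (hd2 : 1 ≤ p2.natDegree) (hd21 : p2.natDegree ≤ p1.natDegree)
    (ha1 : (A1.natDegree : ℤ) = ((n1 : ℤ) - 1) * p1.natDegree - 1)
    (ha2 : (A2.natDegree : ℤ) ≤ ((n2 : ℤ) - 1) * p1.natDegree - 1) :
    ((n1 : ℤ) - 1) * p1.natDegree = (A1.natDegree : ℤ) + 1 ∧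
    (((A2.natDegree : ℤ) = ((n2 : ℤ) - 1) * p1.natDegree - 1 ∧
        (A3.natDegree : ℤ) < ((n3 : ℤ) - 1) * p1.natDegree - 1 ∧
        Tie n1 n2 n3 A1.natDegree A2.natDegree A3.natDegree p1.natDegree =
          {AbelIdx.I2, AbelIdx.I1, AbelIdx.D} ∧
        (A3.natDegree : ℤ) - A2.natDegree ≤ ((n3 : ℤ) - n2) * p2.natDegree ∧
        p2.natDegree ≤ p1.natDegree ∧
        ((n3 : ℤ) - n2) * p1.natDegree ≤ (A3.natDegree : ℤ)) ∨
      ((A2.natDegree : ℤ) < ((n2 : ℤ) - 1) * p1.natDegree - 1 ∧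
        (A3.natDegree : ℤ) = ((n3 : ℤ) - 1) * p1.natDegree - 1 ∧
        Tie n1 n2 n3 A1.natDegree A2.natDegree A3.natDegree p1.natDegree =
          {AbelIdx.I3, AbelIdx.I1, AbelIdx.D} ∧
        p2.natDegree = p1.natDegree) ∨
      ((A2.natDegree : ℤ) = ((n2 : ℤ) - 1) * p1.natDegree - 1 ∧
        (A3.natDegree : ℤ) = ((n3 : ℤ) - 1) * p1.natDegree - 1 ∧
        Tie n1 n2 n3 A1.natDegree A2.natDegree A3.natDegree p1.natDegree =
          {AbelIdx.I3, AbelIdx.I2, AbelIdx.I1, AbelIdx.D} ∧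
        p2.natDegree = p1.natDegree)) := by
  classical
  have hd1 : 1 ≤ p1.natDegree := le_trans hd2 hd21
  -- integer versions of basic facts
  have hn1z : (2 : ℤ) ≤ n1 := by exact_mod_cast hn1
  have hn2z : (n1 : ℤ) < n2 := by exact_mod_cast hn12
  have hn3z : (n2 : ℤ) < n3 := by exact_mod_cast hn23
  have hd1z : (1 : ℤ) ≤ p1.natDegree := by exact_mod_cast hd1
  have hrdz : (p2.natDegree : ℤ) ≤ p1.natDegree := by exact_mod_cast hd21
  have hr1z : (1 : ℤ) ≤ p2.natDegree := by exact_mod_cast hd2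
  -- cast lemmas for truncated subtraction
  have cz2 : ((n3 - 2 : ℕ) : ℤ) = (n3 : ℤ) - 2 := by omega
  have cz22 : ((n2 - 2 : ℕ) : ℤ) = (n2 : ℤ) - 2 := by omega
  have cz32 : ((n3 - n2 : ℕ) : ℤ) = (n3 : ℤ) - n2 := by omega
  have cz31 : ((n3 - n1 : ℕ) : ℤ) = (n3 : ℤ) - n1 := by omega
  have cz21 : ((n2 - n1 : ℕ) : ℤ) = (n2 : ℤ) - n1 := by omega
  have czd : ((p1.natDegree - 1 : ℕ) : ℤ) = (p1.natDegree : ℤ) - 1 := by omega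
  have czr : ((p2.natDegree - 1 : ℕ) : ℤ) = (p2.natDegree : ℤ) - 1 := by omega
  -- divisibility bound from p1
  have hdvd1 : ((n3 : ℤ) - n2) * p1.natDegree ≤ (A3.natDegree : ℤ) := by
    have h := solden_dvd_deg hn1 hn12 hn23 h1 hA3
    have h' : (((n3 - n2) * p1.natDegree : ℕ) : ℤ) ≤ (A3.natDegree : ℤ) := by exact_mod_cast h
    rw [Nat.cast_mul, cz32] at h'
    exact h'
  -- a3 is at most (n3-1)d - 1
  have ha3le : (A3.natDegree : ℤ) ≤ ((n3 : ℤ) - 1) * p1.natDegree - 1 := by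
    by_contra hcon
    push_neg at hcon
    refine solden_no_single_A3 h1 hA3 ?_ ?_ ?_
    · refine lt_of_le_of_lt (ndb_dp p1 (n3 - 2)) ?_
      have hz : (((n3 - 2) * p1.natDegree + (p1.natDegree - 1) : ℕ) : ℤ) < (A3.natDegree : ℤ) := by
        push_cast [cz2, czd]
        linarith
      exact_mod_cast hz
    · refine lt_of_le_of_lt (ndb_mulpow A2 p1 (n3 - n2)) ?_
      have hz : ((A2.natDegree + (n3 - n2) * p1.natDegree : ℕ) : ℤ) < (A3.natDegree : ℤ) := by
        push_cast [cz32]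
        linarith
      exact_mod_cast hz
    · refine lt_of_le_of_lt (ndb_mulpow A1 p1 (n3 - n1)) ?_
      have hz : ((A1.natDegree + (n3 - n1) * p1.natDegree : ℕ) : ℤ) < (A3.natDegree : ℤ) := by
        push_cast [cz31]
        linarith
      exact_mod_cast hz
  refine ⟨by linarith, ?_⟩
  rcases lt_or_eq_of_le ha3le with ha3s | ha3e
  · -- a3 < (n3-1)d - 1
    rcases lt_or_eq_of_le ha2 with ha2s | ha2e
    · -- CASE A : a2 < bound as well; contradiction with (ND2)
      exfalso
      have hlamne : p1.leadingCoeff ≠ 0 := leadingCoeff_ne_zero.mpr h1.1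
      have hder := deriv_natDegree h1.1 hd1
      have hc := solden_coeff h1 ((n3 - 2) * p1.natDegree + (p1.natDegree - 1))
      have ht1 : (p1 ^ (n3 - 2) * Polynomial.derivative p1).coeff
          ((n3 - 2) * p1.natDegree + (p1.natDegree - 1))
          = p1.leadingCoeff ^ (n3 - 2) * ((p1.natDegree : 𝕜) * p1.leadingCoeff) := by
        have h := coeff_mul_degree_add_degree (p1 ^ (n3 - 2)) (Polynomial.derivative p1)
        rw [natDegree_pow, hder.1, leadingCoeff_pow, hder.2] at h
        exact h
      have hN3 : A3.natDegree < (n3 - 2) * p1.natDegree + (p1.natDegree - 1) := by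
        have hz : (A3.natDegree : ℤ) < (((n3 - 2) * p1.natDegree + (p1.natDegree - 1) : ℕ) : ℤ) := by
          push_cast [cz2, czd]
          linarith
        exact_mod_cast hz
      have hN2 : (A2 * p1 ^ (n3 - n2)).natDegree < (n3 - 2) * p1.natDegree + (p1.natDegree - 1) := by
        refine lt_of_le_of_lt (ndb_mulpow A2 p1 (n3 - n2)) ?_
        have hz : ((A2.natDegree + (n3 - n2) * p1.natDegree : ℕ) : ℤ)
            < (((n3 - 2) * p1.natDegree + (p1.natDegree - 1) : ℕ) : ℤ) := by
          push_cast [cz32, cz2, czd]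
          linarith
        exact_mod_cast hz
      have hidx : A1.natDegree + (n3 - n1) * p1.natDegree
          = (n3 - 2) * p1.natDegree + (p1.natDegree - 1) := by
        have hz : ((A1.natDegree + (n3 - n1) * p1.natDegree : ℕ) : ℤ)
            = (((n3 - 2) * p1.natDegree + (p1.natDegree - 1) : ℕ) : ℤ) := by
          push_cast [cz31, cz2, czd]
          linarith
        exact_mod_cast hz
      have ht4 : (A1 * p1 ^ (n3 - n1)).coeff ((n3 - 2) * p1.natDegree + (p1.natDegree - 1))
          = A1.leadingCoeff * p1.leadingCoeff ^ (n3 - n1) := by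
        have h := coeff_mul_degree_add_degree A1 (p1 ^ (n3 - n1))
        rw [natDegree_pow, leadingCoeff_pow] at h
        rw [← hidx]
        exact h
      rw [ht1, coeff_eq_zero_of_natDegree_lt hN3, coeff_eq_zero_of_natDegree_lt hN2, ht4] at hc
      -- hc : lam^(n3-2) * (d * lam) + 0 + 0 + α1 * lam^(n3-n1) = 0
      have hpow : p1.leadingCoeff ^ (n3 - 2) * p1.leadingCoeff
          = p1.leadingCoeff ^ (n3 - n1) * p1.leadingCoeff ^ (n1 - 1) := by
        rw [← pow_succ, ← pow_add]
        congr 1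
        omega
      have hprod : p1.leadingCoeff ^ (n3 - n1)
          * ((p1.natDegree : 𝕜) * p1.leadingCoeff ^ (n1 - 1) + A1.leadingCoeff) = 0 := by
        linear_combination hc - (p1.natDegree : 𝕜) * hpow
      have halpha : A1.leadingCoeff = -((p1.natDegree : 𝕜) * p1.leadingCoeff ^ (n1 - 1)) := by
        rcases mul_eq_zero.mp hprod with h | h
        · exact absurd h (pow_ne_zero _ hlamne)
        · linear_combination h
      have htie : Tie n1 n2 n3 A1.natDegree A2.natDegree A3.natDegree p1.natDegree
          = {AbelIdx.I1, AbelIdx.D} := by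
        refine tie_eq_general _ _ _ _ _ _ _ _ (by linarith) (by decide) (by decide) ?_ ?_
        · rw [if_neg (by decide)]; linarith
        · rw [if_neg (by decide)]; linarith
      have hGam : p1.natDegree ∈ Gamma n1 n2 n3 A1.natDegree A2.natDegree A3.natDegree := by
        refine ⟨by omega, hdvd1, ?_⟩
        right; right; right; right; right
        linarith
      have hEA : EdgeAdmissible n1 n2 n3 A1.natDegree A2.natDegree A3.natDegree p1.natDegree := by
        unfold EdgeAdmissible
        rw [htie]
        decide
      obtain ⟨-, nd2, -⟩ := hND p1.natDegree hGam hEA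
      have hedge : edgePoly n1 n2 n3 A1 A2 A3 p1.natDegree
          = Polynomial.C A1.leadingCoeff * Polynomial.X ^ n1
            + (p1.natDegree : Polynomial 𝕜) * Polynomial.X := by
        unfold edgePoly
        rw [htie]
        simp
      have hcne : p1.leadingCoeff⁻¹ ≠ 0 := inv_ne_zero hlamne
      have hlc : p1.leadingCoeff * p1.leadingCoeff⁻¹ = 1 := mul_inv_cancel₀ hlamne
      have hpowc : p1.leadingCoeff ^ (n1 - 1) * (p1.leadingCoeff⁻¹) ^ (n1 - 1) = 1 := by
        rw [← mul_pow, hlc, one_pow]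
      have hroot : (edgePoly n1 n2 n3 A1 A2 A3 p1.natDegree).IsRoot p1.leadingCoeff⁻¹ := by
        rw [Polynomial.IsRoot, hedge]
        simp only [eval_add, eval_mul, eval_pow, eval_C, eval_X, eval_natCast]
        rw [halpha]
        have hsplit : (p1.leadingCoeff⁻¹) ^ n1
            = (p1.leadingCoeff⁻¹) ^ (n1 - 1) * p1.leadingCoeff⁻¹ := by
          rw [← pow_succ]
          congr 1
          omega
        rw [hsplit]
        linear_combination (-(p1.natDegree : 𝕜) * p1.leadingCoeff⁻¹) * hpowc
      have hDmem : AbelIdx.D ∈ Tie n1 n2 n3 A1.natDegree A2.natDegree A3.natDegree p1.natDegree := by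
        rw [htie]
        decide
      have hm1 : 1 ≤ (n1 - 1) * p1.natDegree := Nat.one_le_iff_ne_zero.mpr
        (Nat.mul_ne_zero (by omega) (by omega))
      refine nd2 hDmem _ hcne hroot ((n1 - 1) * p1.natDegree) hm1 ?_
      rw [hedge]
      have czk : (((n1 - 1) * p1.natDegree : ℕ) : 𝕜) = ((n1 : 𝕜) - 1) * p1.natDegree := by
        push_cast [Nat.cast_sub (by omega : 1 ≤ n1)]
        ring
      rw [czk]
      simp only [derivative_add, derivative_mul, derivative_C, derivative_X, derivative_X_pow,
        derivative_natCast, zero_mul, mul_one, zero_add, add_zero, eval_add, eval_mul, eval_pow,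
        eval_C, eval_X, eval_natCast, mul_zero]
      rw [halpha]
      linear_combination (-(p1.natDegree : 𝕜) * (n1 : 𝕜)) * hpowc
    · -- CASE (1) : a2 = (n2-1)d - 1, a3 < (n3-1)d - 1
      left
      have htie : Tie n1 n2 n3 A1.natDegree A2.natDegree A3.natDegree p1.natDegree
          = {AbelIdx.I2, AbelIdx.I1, AbelIdx.D} := by
        refine tie_eq_general _ _ _ _ _ _ _ _ (by linarith) (by decide) (by decide) ?_ ?_
        · rw [if_pos (by decide)]; linarith
        · rw [if_neg (by decide)]; linarith
      have hkey : (A3.natDegree : ℤ) - A2.natDegree ≤ ((n3 : ℤ) - n2) * p2.natDegree := by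
        rcases lt_or_eq_of_le hd21 with hlt | heqd
        · -- p2 has strictly smaller degree : use the factorization through p2
          have hrdm1 : (p2.natDegree : ℤ) ≤ (p1.natDegree : ℤ) - 1 := by
            have : p2.natDegree + 1 ≤ p1.natDegree := hlt
            exact_mod_cast by omega
          have hm21 : ((n2 : ℤ) - n1) * p2.natDegree < ((n2 : ℤ) - n1) * p1.natDegree :=
            mul_lt_mul_of_pos_left (by exact_mod_cast hlt) (by linarith)
          have hm22 : ((n2 : ℤ) - 2) * p2.natDegree ≤ ((n2 : ℤ) - 2) * (p1.natDegree - 1) :=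
            mul_le_mul_of_nonneg_left hrdm1 (by linarith)
          set B2 : Polynomial 𝕜 :=
            p2 ^ (n2 - 2) * Polynomial.derivative p2 + A2 + A1 * p2 ^ (n2 - n1) with hB2
          have hA3f : A3 = -(p2 ^ (n3 - n2) * B2) := solden_factor hn1 hn12 hn23 h2
          have hb1 : (p2 ^ (n2 - 2) * Polynomial.derivative p2).natDegree < A2.natDegree := by
            refine lt_of_le_of_lt (ndb_dp p2 (n2 - 2)) ?_
            have hz : (((n2 - 2) * p2.natDegree + (p2.natDegree - 1) : ℕ) : ℤ)
                < (A2.natDegree : ℤ) := by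
              push_cast [cz22, czr]
              linarith
            exact_mod_cast hz
          have hb3 : (A1 * p2 ^ (n2 - n1)).natDegree < A2.natDegree := by
            refine lt_of_le_of_lt (ndb_mulpow A1 p2 (n2 - n1)) ?_
            have hz : ((A1.natDegree + (n2 - n1) * p2.natDegree : ℕ) : ℤ)
                < (A2.natDegree : ℤ) := by
              push_cast [cz21]
              linarith
            exact_mod_cast hz
          have hcoef : B2.coeff A2.natDegree = A2.leadingCoeff := by
            rw [hB2, coeff_add, coeff_add, coeff_eq_zero_of_natDegree_lt hb1,
              coeff_eq_zero_of_natDegree_lt hb3, coeff_natDegree]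
            ring
          have hB2ne : B2 ≠ 0 := by
            intro h0
            rw [h0, Polynomial.coeff_zero] at hcoef
            exact hA2 (leadingCoeff_eq_zero.mp hcoef.symm)
          have hB2le : B2.natDegree ≤ A2.natDegree := by
            rw [hB2]
            refine (natDegree_add_le _ _).trans (max_le ((natDegree_add_le _ _).trans
              (max_le hb1.le le_rfl)) hb3.le)
          have hB2deg : B2.natDegree = A2.natDegree :=
            le_antisymm hB2le (le_natDegree_of_ne_zero (by rw [hcoef]; exact leadingCoeff_ne_zero.mpr hA2))
          have hdeg : A3.natDegree = (n3 - n2) * p2.natDegree + A2.natDegree := by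
            rw [hA3f, natDegree_neg, natDegree_mul (pow_ne_zero _ h2.1) hB2ne,
              natDegree_pow, hB2deg]
          have hz : (A3.natDegree : ℤ) = ((n3 : ℤ) - n2) * p2.natDegree + A2.natDegree := by
            rw [hdeg]
            push_cast [cz32]
            ring
          linarith
        · rw [heqd]
          linarith
      exact ⟨ha2e, ha3s, htie, hkey, hd21, hdvd1⟩
  · -- a3 = (n3-1)d - 1
    have hreq : p2.natDegree = p1.natDegree := by
      rcases lt_or_eq_of_le hd21 with hlt | heqd
      · exfalso
        have hrdm1 : (p2.natDegree : ℤ) ≤ (p1.natDegree : ℤ) - 1 := by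
          have : p2.natDegree + 1 ≤ p1.natDegree := hlt
          exact_mod_cast by omega
        have hrltd : (p2.natDegree : ℤ) < p1.natDegree := by exact_mod_cast hlt
        have hm31 : ((n3 : ℤ) - n1) * p2.natDegree < ((n3 : ℤ) - n1) * p1.natDegree :=
          mul_lt_mul_of_pos_left hrltd (by linarith)
        have hm32 : ((n3 : ℤ) - n2) * p2.natDegree < ((n3 : ℤ) - n2) * p1.natDegree :=
          mul_lt_mul_of_pos_left hrltd (by linarith)
        have hm3 : ((n3 : ℤ) - 1) * p2.natDegree ≤ ((n3 : ℤ) - 1) * (p1.natDegree - 1) :=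
          mul_le_mul_of_nonneg_left hrdm1 (by linarith)
        refine solden_no_single_A3 h2 hA3 ?_ ?_ ?_
        · refine lt_of_le_of_lt (ndb_dp p2 (n3 - 2)) ?_
          have hz : (((n3 - 2) * p2.natDegree + (p2.natDegree - 1) : ℕ) : ℤ)
              < (A3.natDegree : ℤ) := by
            push_cast [cz2, czr]
            linarith
          exact_mod_cast hz
        · refine lt_of_le_of_lt (ndb_mulpow A2 p2 (n3 - n2)) ?_
          have hz : ((A2.natDegree + (n3 - n2) * p2.natDegree : ℕ) : ℤ)
              < (A3.natDegree : ℤ) := by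
            push_cast [cz32]
            linarith
          exact_mod_cast hz
        · refine lt_of_le_of_lt (ndb_mulpow A1 p2 (n3 - n1)) ?_
          have hz : ((A1.natDegree + (n3 - n1) * p2.natDegree : ℕ) : ℤ)
              < (A3.natDegree : ℤ) := by
            push_cast [cz31]
            linarith
          exact_mod_cast hz
      · exact heqd
    rcases lt_or_eq_of_le ha2 with ha2s | ha2e
    · -- CASE (2)
      right; left
      have htie : Tie n1 n2 n3 A1.natDegree A2.natDegree A3.natDegree p1.natDegree
          = {AbelIdx.I3, AbelIdx.I1, AbelIdx.D} := by
        refine tie_eq_general _ _ _ _ _ _ _ _ (by linarith) (by decide) (by decide) ?_ ?_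
        · rw [if_neg (by decide)]; linarith
        · rw [if_pos (by decide)]; linarith
      exact ⟨ha2s, ha3e, htie, hreq⟩
    · -- CASE (3)
      right; right
      have htie : Tie n1 n2 n3 A1.natDegree A2.natDegree A3.natDegree p1.natDegree
          = {AbelIdx.I3, AbelIdx.I2, AbelIdx.I1, AbelIdx.D} := by
        refine tie_eq_general _ _ _ _ _ _ _ _ (by linarith) (by decide) (by decide) ?_ ?_
        · rw [if_pos (by decide)]; linarith
        · rw [if_pos (by decide)]; linarith
      exact ⟨ha2e, ha3e, htie, hreq⟩
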